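/- arXiv:1104.0588 — 5 statements merged into one kernel-verified Lean document; each statement's English description precedes it below -/
import Mathlib

section
/- Let G be a torsion-free group with an abelian normal subgroup A such that G/A is infinite cyclic, and let t ∈ G be an element whose image generates G/A. Put Ā = {a ∈ A : t a t⁻¹ = a}. Then Ā is a normal subgroup of G and the quotient G/Ā is torsion-free. -/
/-- The subgroup `Ā = {a ∈ A : t * a * t⁻¹ = a}` of elements of a subgroup `A` of `G`
fixed under conjugation by `t`. -/
def fixedByConj {G : Type*} [Group G] (A : Subgroup G) (t : G) : Subgroup G where
  carrier := {a | a ∈ A ∧ t * a * t⁻¹ = a}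
  one_mem' := ⟨one_mem A, by simp⟩
  mul_mem' := by
    rintro a b ⟨haA, ha⟩ ⟨hbA, hb⟩
    refine ⟨mul_mem haA hbA, ?_⟩
    have : t * (a * b) * t⁻¹ = (t * a * t⁻¹) * (t * b * t⁻¹) := by group
    rw [this, ha, hb]
  inv_mem' := by
    rintro a ⟨haA, ha⟩
    refine ⟨inv_mem haA, ?_⟩
    have : t * a⁻¹ * t⁻¹ = (t * a * t⁻¹)⁻¹ := by group
    rw [this, ha]

/-- A monoid is torsion-free if its only element of finite order is the identity
(the Mathlib definition of December 2024, since removed). -/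
def Monoid.IsTorsionFree (G : Type*) [Monoid G] : Prop :=
  ∀ g : G, g ≠ 1 → ¬IsOfFinOrder g

/-!
Elements of `Ā` commute with `t` and, as `A` is abelian, with `A`; since `G = A ⟨t⟩`, `Ā` is
central and hence normal. If `g ^ n ∈ Ā` with `n > 0`, then `g ∈ A` because `G / A ≅ ℤ` is
torsion-free. The commutator `c = t g t⁻¹ g⁻¹` lies in the abelian group `A`, so
`c ^ n = t g ^ n t⁻¹ g ^ (-n) = 1`, and torsion-freeness of `G` gives `c = 1`, i.e. `g ∈ Ā`.
-/

section

variable {G : Type*} [Group G]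

theorem Monoid.IsTorsionFree.eq_one_of_pow_eq_one (htf : Monoid.IsTorsionFree G) {x : G}
    {n : ℕ} (hn : n ≠ 0) (hx : x ^ n = 1) : x = 1 :=
  of_not_not fun hx1 => htf x hx1 (isOfFinOrder_iff_pow_eq_one.mpr ⟨n, Nat.pos_of_ne_zero hn, hx⟩)

theorem Monoid.IsTorsionFree.quotient_of_pow_mem {N : Subgroup G} [N.Normal]
    (h : ∀ (g : G) (n : ℕ), n ≠ 0 → g ^ n ∈ N → g ∈ N) : Monoid.IsTorsionFree (G ⧸ N) := by
  rintro q hq hfin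
  obtain ⟨n, hn, hpow⟩ := isOfFinOrder_iff_pow_eq_one.mp hfin
  obtain ⟨g, rfl⟩ := QuotientGroup.mk_surjective q
  rw [← QuotientGroup.mk_pow, QuotientGroup.eq_one_iff] at hpow
  exact hq ((QuotientGroup.eq_one_iff g).mpr (h g n hn.ne' hpow))

theorem QuotientGroup.mem_of_pow_mem {N : Subgroup G} [N.Normal] [IsMulTorsionFree (G ⧸ N)]
    {g : G} {n : ℕ} (hn : n ≠ 0) (hgn : g ^ n ∈ N) : g ∈ N := by
  rw [← QuotientGroup.eq_one_iff] at hgn ⊢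
  exact pow_left_injective hn (by simpa using hgn)

theorem Subgroup.normal_of_le_center {H : Subgroup G} (hH : H ≤ Subgroup.center G) : H.Normal :=
  ⟨fun x hx g => by rwa [Subgroup.mem_center_iff.mp (hH hx) g, mul_inv_cancel_right]⟩

theorem mem_fixedByConj_iff {A : Subgroup G} {t a : G} :
    a ∈ fixedByConj A t ↔ a ∈ A ∧ Commute t a :=
  and_congr_right fun _ => mul_inv_eq_iff_eq_mul

theorem fixedByConj_le_center {A : Subgroup G} [A.Normal]
    (hab : ∀ a ∈ A, ∀ b ∈ A, a * b = b * a) {t : G}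
    (ht : Subgroup.zpowers (t : G ⧸ A) = ⊤) : fixedByConj A t ≤ Subgroup.center G := by
  intro x hx
  obtain ⟨hxA, htx⟩ := mem_fixedByConj_iff.mp hx
  refine Subgroup.mem_center_iff.mpr fun g => ?_
  obtain ⟨k, hk⟩ := Subgroup.mem_zpowers_iff.mp (ht ▸ Subgroup.mem_top (g : G ⧸ A))
  have hA : (t ^ k)⁻¹ * g ∈ A := QuotientGroup.eq.mp (by rwa [QuotientGroup.mk_zpow])
  have hgx : Commute (t ^ k * ((t ^ k)⁻¹ * g)) x := (htx.zpow_left k).mul_left (hab _ hA x hxA)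
  rwa [mul_inv_cancel_left] at hgx

theorem commutator_pow_of_mem {A : Subgroup G} [A.Normal] (hab : ∀ a ∈ A, ∀ b ∈ A, a * b = b * a)
    (t : G) {g : G} (hg : g ∈ A) (n : ℕ) :
    (t * g * t⁻¹ * g⁻¹) ^ n = t * g ^ n * t⁻¹ * (g ^ n)⁻¹ := by
  have hcomm : Commute (t * g * t⁻¹) g⁻¹ :=
    Commute.inv_right (hab _ (Subgroup.Normal.conj_mem ‹_› g hg t) _ hg)
  rw [hcomm.mul_pow, conj_pow, inv_pow]

theorem mem_fixedByConj_of_pow_mem (htf : Monoid.IsTorsionFree G) {A : Subgroup G} [A.Normal]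
    (hab : ∀ a ∈ A, ∀ b ∈ A, a * b = b * a) {t g : G} (hg : g ∈ A) {n : ℕ} (hn : n ≠ 0)
    (hgn : g ^ n ∈ fixedByConj A t) : g ∈ fixedByConj A t := by
  have hc : (t * g * t⁻¹ * g⁻¹) ^ n = 1 := by
    rw [commutator_pow_of_mem hab t hg n, hgn.2, mul_inv_cancel]
  exact ⟨hg, mul_inv_eq_one.mp (htf.eq_one_of_pow_eq_one hn hc)⟩

end

/-- Let `G` be a torsion-free group with an abelian normal subgroup `A` such that
`G/A` is infinite cyclic, and let `t ∈ G` be an element whose image generates `G/A`.  Put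
`Ā = {a ∈ A : t a t⁻¹ = a}`.  Then `Ā` is a normal subgroup of `G` and the quotient `G/Ā` is
torsion-free. -/
theorem stmt_2 {G : Type*} [Group G] (htf : Monoid.IsTorsionFree G)
    (A : Subgroup G) [A.Normal]
    (hab : ∀ a ∈ A, ∀ b ∈ A, a * b = b * a)
    (hcyc : Nonempty ((G ⧸ A) ≃* Multiplicative ℤ))
    (t : G) (ht : Subgroup.zpowers ((t : G ⧸ A)) = ⊤) :
    (fixedByConj A t).Normal ∧
      ∀ [(fixedByConj A t).Normal], Monoid.IsTorsionFree (G ⧸ fixedByConj A t) := by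
  obtain ⟨e⟩ := hcyc
  have : IsMulTorsionFree (G ⧸ A) := e.injective.isMulTorsionFree e.toMonoidHom
  refine ⟨Subgroup.normal_of_le_center (fixedByConj_le_center hab ht), ?_⟩
  exact Monoid.IsTorsionFree.quotient_of_pow_mem fun g n hn hgn =>
    mem_fixedByConj_of_pow_mem (t := t) htf hab (QuotientGroup.mem_of_pow_mem hn hgn.1) hn hgn
end

section
/- Let A be a torsion-free abelian group of finite rank, i.e. the ℚ-vector space A ⊗_ℤ ℚ is finite dimensional. Then there exists an integer m such that every subgroup of the automorphism group Aut(A) all of whose elements have finite order has cardinality at most m. -/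
/-!
A torsion-free abelian group `A` is flat over `ℤ`, so base change embeds `Aut(A)` into `GL(V)`,
`V = ℚ ⊗ A`, a `ℚ`-vector space of some dimension `d`. The trace of an element of finite order
of `GL(V)` is a sum of `d` roots of unity: a rational algebraic integer, hence an integer in
`[-d, d]`, equal to `d` only for the identity. If `H ≤ GL(V)` is periodic, choose
`b₁, …, b_r ∈ H` forming a basis of the span of `H`, so `r ≤ d²`. Then `h ↦ (tr (h bᵢ))ᵢ` maps
`H` into `[-d, d] ^ r`, injectively: if `h` and `h'` have the same image, the trace forms
`tr (h ·)` and `tr (h' ·)` agree on the span of `H`, so `tr (h h'⁻¹) = tr 1 = d` and `h = h'`.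
Hence `|H| ≤ (2d + 1) ^ (d²)`.
-/

open Polynomial Module
open scoped TensorProduct

theorem spectrum.pow_eq_one_of_mem {𝕜 A : Type*} [Field 𝕜] [Ring A] [Algebra 𝕜 A] {a : A}
    {k : ℕ} (ha : a ^ k = 1) {μ : 𝕜} (hμ : μ ∈ spectrum 𝕜 a) : μ ^ k = 1 := by
  cases subsingleton_or_nontrivial A
  · simp [spectrum.of_subsingleton] at hμ
  · simpa [ha, spectrum.one_eq] using spectrum.pow_mem_pow a k hμ

theorem Complex.re_lt_one_of_norm_eq_one {z : ℂ} (hz : ‖z‖ = 1) (h1 : z ≠ 1) : z.re < 1 := by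
  refine (hz ▸ z.re_le_norm).lt_of_ne fun hre ↦ h1 ?_
  have him := (Complex.nonneg_iff.1 (Complex.re_eq_norm.1 (hre.trans hz.symm))).2
  exact Complex.ext hre him.symm

namespace Module.End

section Field

variable {K V : Type*} [Field K] [AddCommGroup V] [Module K V] [FiniteDimensional K V]
  {f : End K V} {k : ℕ}

theorem pow_eq_one_of_mem_roots_charpoly (hf : f ^ k = 1) {μ : K} (hμ : μ ∈ f.charpoly.roots) :
    μ ^ k = 1 :=
  spectrum.pow_eq_one_of_mem hf <|
    (mem_spectrum_iff_isRoot_charpoly f μ).2 (isRoot_of_mem_roots hμ)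

theorem card_roots_charpoly [IsAlgClosed K] (f : End K V) :
    Multiset.card f.charpoly.roots = finrank K V := by
  rw [splits_iff_card_roots.1 (IsAlgClosed.splits _), LinearMap.charpoly_natDegree]

/-- `X ^ k - 1` is squarefree, so the minimal polynomial of `f` divides `X - 1`. -/
theorem eq_one_of_pow_eq_one_of_charpoly (hk : (k : K) ≠ 0) (hf : f ^ k = 1)
    (hχ : f.charpoly = (X - 1) ^ finrank K V) : f = 1 := by
  rcases (finrank K V).eq_zero_or_pos with h0 | hpos
  · have := finrank_zero_iff.1 h0
    exact Subsingleton.elim _ _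
  have hsq : Squarefree (minpoly K f) :=
    (separable_X_pow_sub_C 1 hk one_ne_zero).squarefree.squarefree_of_dvd
      (minpoly.dvd K f (by simp [hf]))
  have hdvd : minpoly K f ∣ X - 1 := by
    rw [← hsq.dvd_pow_iff_dvd hpos.ne', ← hχ]
    exact minpoly.dvd K f (LinearMap.aeval_self_charpoly f)
  simpa [sub_eq_zero] using aeval_eq_zero_of_dvd_aeval_eq_zero hdvd (minpoly.aeval K f)

end Field

section Complex

variable {V : Type*} [AddCommGroup V] [Module ℂ V] [FiniteDimensional ℂ V] {f : End ℂ V}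

theorem norm_eq_one_of_mem_roots_charpoly (hf : IsOfFinOrder f) {μ : ℂ}
    (hμ : μ ∈ f.charpoly.roots) : ‖μ‖ = 1 :=
  have ⟨_, hk, hfk⟩ := hf.exists_pow_eq_one
  Complex.norm_eq_one_of_pow_eq_one (pow_eq_one_of_mem_roots_charpoly hfk hμ) hk.ne'

theorem norm_trace_le_of_isOfFinOrder (hf : IsOfFinOrder f) :
    ‖LinearMap.trace ℂ V f‖ ≤ finrank ℂ V := by
  rw [trace_eq_sum_roots_charpoly_of_splits (IsAlgClosed.splits _), ← card_roots_charpoly f]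
  calc ‖f.charpoly.roots.sum‖ ≤ (f.charpoly.roots.map (‖·‖)).sum := norm_multiset_sum_le _
    _ = (f.charpoly.roots.map fun _ ↦ (1 : ℝ)).sum :=
      congrArg _ (Multiset.map_congr rfl fun _ ↦ norm_eq_one_of_mem_roots_charpoly hf)
    _ = Multiset.card f.charpoly.roots := by simp

theorem isIntegral_trace_of_isOfFinOrder (hf : IsOfFinOrder f) :
    IsIntegral ℤ (LinearMap.trace ℂ V f) := by
  obtain ⟨k, hk, hfk⟩ := hf.exists_pow_eq_one
  rw [trace_eq_sum_roots_charpoly_of_splits (IsAlgClosed.splits _)]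
  refine IsIntegral.multiset_sum fun μ hμ ↦ ⟨X ^ k - 1, monic_X_pow_sub_C 1 hk.ne', ?_⟩
  simp [pow_eq_one_of_mem_roots_charpoly hfk hμ]

/-- The trace is a sum of `finrank ℂ V` numbers of real part at most `1`, each equal to `1` only
if the number is `1`. -/
theorem charpoly_eq_of_isOfFinOrder_of_trace_eq (hf : IsOfFinOrder f)
    (htr : LinearMap.trace ℂ V f = finrank ℂ V) : f.charpoly = (X - 1) ^ finrank ℂ V := by
  have hroots : ∀ μ ∈ f.charpoly.roots, μ = 1 := by
    by_contra! ⟨μ, hμ, hμ1⟩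
    have hre : (f.charpoly.roots.map Complex.re).sum = finrank ℂ V := by
      have := congrArg Complex.reAddGroupHom htr
      rwa [trace_eq_sum_roots_charpoly_of_splits (IsAlgClosed.splits _), map_multiset_sum,
        Complex.coe_reAddGroupHom, Complex.natCast_re] at this
    have hlt : (f.charpoly.roots.map Complex.re).sum < (f.charpoly.roots.map fun _ ↦ 1).sum :=
      Multiset.sum_lt_sum
        (fun ν hν ↦ (Complex.re_le_norm ν).trans_eq (norm_eq_one_of_mem_roots_charpoly hf hν))
        ⟨μ, hμ, Complex.re_lt_one_of_norm_eq_one (norm_eq_one_of_mem_roots_charpoly hf hμ) hμ1⟩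
    simp [hre, card_roots_charpoly] at hlt
  rw [(IsAlgClosed.splits _).eq_prod_roots_of_monic (LinearMap.charpoly_monic f),
    Multiset.eq_replicate.2 ⟨card_roots_charpoly f, hroots⟩]
  simp

end Complex

section Rat

variable {V : Type*} [AddCommGroup V] [Module ℚ V] [FiniteDimensional ℚ V] {f : End ℚ V}

theorem exists_int_trace_eq_of_isOfFinOrder (hf : IsOfFinOrder f) :
    ∃ z : ℤ, LinearMap.trace ℚ V f = z ∧ |z| ≤ finrank ℚ V := by
  have hfC : IsOfFinOrder (f.baseChange ℂ) := (baseChangeHom ℚ ℂ V).toMonoidHom.isOfFinOrder hf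
  have hint := isIntegral_trace_of_isOfFinOrder hfC
  rw [LinearMap.trace_baseChange, isIntegral_algebraMap_iff (algebraMap ℚ ℂ).injective] at hint
  obtain ⟨z, hz⟩ := IsIntegrallyClosed.isIntegral_iff.1 hint
  refine ⟨z, hz.symm, ?_⟩
  have hnorm := norm_trace_le_of_isOfFinOrder hfC
  rw [LinearMap.trace_baseChange, finrank_baseChange, ← hz] at hnorm
  exact_mod_cast (by simpa using hnorm : (|z| : ℝ) ≤ finrank ℚ V)

theorem trace_mem_Icc_of_isOfFinOrder (hf : IsOfFinOrder f) :
    LinearMap.trace ℚ V f ∈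
      (Finset.Icc (-finrank ℚ V : ℤ) (finrank ℚ V)).image ((↑) : ℤ → ℚ) := by
  obtain ⟨z, hz, hzd⟩ := exists_int_trace_eq_of_isOfFinOrder hf
  exact Finset.mem_image.2 ⟨z, Finset.mem_Icc.2 (abs_le.1 hzd), hz.symm⟩

theorem eq_one_of_isOfFinOrder_of_trace_eq (hf : IsOfFinOrder f)
    (htr : LinearMap.trace ℚ V f = finrank ℚ V) : f = 1 := by
  have hfC : IsOfFinOrder (f.baseChange ℂ) := (baseChangeHom ℚ ℂ V).toMonoidHom.isOfFinOrder hf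
  obtain ⟨k, hk, hfk⟩ := hfC.exists_pow_eq_one
  have htrC : LinearMap.trace ℂ _ (f.baseChange ℂ) = finrank ℂ (ℂ ⊗[ℚ] V) := by
    rw [LinearMap.trace_baseChange, htr, finrank_baseChange, map_natCast]
  apply LinearMap.baseChangeHom_injective ℚ V ℂ
  refine (eq_one_of_pow_eq_one_of_charpoly (by exact_mod_cast hk.ne') hfk
    (charpoly_eq_of_isOfFinOrder_of_trace_eq hfC htrC)).trans (map_one (baseChangeHom ℚ ℂ V)).symm

variable {G : Type*} [Group G] {φ : G →* End ℚ V}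

theorem eq_of_forall_trace_mul_eq (hφ : Function.Injective φ) {H : Subgroup G}
    (hH : ∀ x ∈ H, IsOfFinOrder x) {x y : G} (hx : x ∈ H) (hy : y ∈ H)
    (htr : ∀ z ∈ H, LinearMap.trace ℚ V (φ x * φ z) = LinearMap.trace ℚ V (φ y * φ z)) :
    x = y := by
  have hxy : φ (x * y⁻¹) = 1 := by
    refine eq_one_of_isOfFinOrder_of_trace_eq (φ.isOfFinOrder (hH _ (mul_mem hx (inv_mem hy)))) ?_
    rw [map_mul, htr _ (inv_mem hy), ← map_mul, mul_inv_cancel, map_one, LinearMap.trace_one]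
  exact mul_inv_eq_one.1 (hφ (hxy.trans (map_one φ).symm))

theorem finite_and_card_le_of_forall_isOfFinOrder (hφ : Function.Injective φ) (H : Subgroup G)
    (hH : ∀ x ∈ H, IsOfFinOrder x) :
    Finite H ∧ Nat.card H ≤ (2 * finrank ℚ V + 1) ^ (finrank ℚ V ^ 2) := by
  classical
  set T := (Finset.Icc (-finrank ℚ V : ℤ) (finrank ℚ V)).image ((↑) : ℤ → ℚ)
  obtain ⟨b, hbH, hspan, hli⟩ := exists_linearIndependent ℚ (φ '' H)
  have := hli.finite
  have : Fintype b := .ofFinite b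
  let F : H → b → T := fun x w ↦ ⟨LinearMap.trace ℚ V (φ x * w), by
    obtain ⟨z, hz, hzw⟩ := hbH w.2
    rw [← hzw, ← map_mul]
    exact trace_mem_Icc_of_isOfFinOrder (φ.isOfFinOrder (hH _ (mul_mem x.2 hz)))⟩
  have hF : Function.Injective F := by
    intro x y hxy
    refine Subtype.ext (eq_of_forall_trace_mul_eq hφ hH x.2 y.2 fun z hz ↦ ?_)
    let L (g : G) : End ℚ V →ₗ[ℚ] ℚ := LinearMap.trace ℚ V ∘ₗ LinearMap.mulLeft ℚ (φ g)
    have hb : Set.EqOn (L x) (L y) b := fun w hw ↦ congrArg Subtype.val (congrFun hxy ⟨w, hw⟩)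
    exact LinearMap.eqOn_span hb (hspan ▸ Submodule.subset_span ⟨z, hz, rfl⟩)
  have hT : T.card ≤ 2 * finrank ℚ V + 1 :=
    Finset.card_image_le.trans (by rw [Int.card_Icc]; omega)
  have hb : Fintype.card b ≤ finrank ℚ V ^ 2 := by
    simpa [finrank_linearMap, sq] using hli.fintype_card_le_finrank
  refine ⟨_root_.Finite.of_injective F hF, (Nat.card_le_card_of_injective F hF).trans ?_⟩
  rw [Nat.card_fun, Nat.card_eq_fintype_card, Nat.card_eq_fintype_card, Fintype.card_coe]
  exact (Nat.pow_le_pow_left hT _).trans (Nat.pow_le_pow_right (by omega) hb)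

end Rat

end Module.End

def AddAut.toIntLinearEnd (A : Type*) [AddCommGroup A] :
    Multiplicative (AddAut A) →* Module.End ℤ A where
  toFun e := e.toAdd.toAddMonoidHom.toIntLinearMap
  map_one' := rfl
  map_mul' _ _ := rfl

theorem AddAut.toIntLinearEnd_injective (A : Type*) [AddCommGroup A] :
    Function.Injective (toIntLinearEnd A) :=
  fun _ _ h ↦ AddEquiv.ext (LinearMap.congr_fun h)

/-- The December 2024 Mathlib definition, removed since. -/
def AddMonoid.IsTorsionFree (G : Type*) [AddMonoid G] : Prop :=
  ∀ g : G, g ≠ 0 → ¬IsOfFinAddOrder g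

/-- Let `A` be a torsion-free abelian group of finite rank, i.e. the `ℚ`-vector
space `ℚ ⊗_ℤ A` is finite dimensional.  Then there exists an integer `m` such that every
subgroup of `Aut(A)` all of whose elements have finite order is finite of cardinality at
most `m`. -/
theorem stmt_3 {A : Type*} [AddCommGroup A] (htf : AddMonoid.IsTorsionFree A)
    (hfin : FiniteDimensional ℚ (ℚ ⊗[ℤ] A)) :
    ∃ m : ℕ, ∀ H : AddSubgroup (AddAut A), (∀ x ∈ H, IsOfFinAddOrder x) →
      Finite H ∧ Nat.card H ≤ m := by
  -- torsion-free `ℤ`-modules are flat, which makes base change to `ℚ` injective on `End A`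
  have : IsAddTorsionFree A := .of_not_isOfFinAddOrder fun a ha ↦ htf a ha
  let φ := (Module.End.baseChangeHom ℤ ℚ A).toMonoidHom.comp (AddAut.toIntLinearEnd A)
  have hφ : Function.Injective φ :=
    (LinearMap.baseChangeHom_injective ℤ A ℚ).comp (AddAut.toIntLinearEnd_injective A)
  exact ⟨_, fun H hH ↦ Module.End.finite_and_card_le_of_forall_isOfFinOrder hφ H.toSubgroup
    fun x hx ↦ (isOfFinOrder_ofAdd_iff (x := x.toAdd)).2 (hH _ hx)⟩
end

section
/- For every natural number h there exists an integer ν = ν(h) with the following property: for every torsion-free abelian group A of rank h, every automorphism t of A, and every a ∈ A, if t^k(a) = a for some integer k ≥ 1, then t^m(a) = a for some integer m with 1 ≤ m ≤ ν. In other words, all finite orbits of elements of A under the cyclic group generated by t have length at most ν. -/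
/-!
Tensoring with `ℚ` turns `t` into an automorphism `f` of an `h`-dimensional `ℚ`-vector space,
and `a ↦ 1 ⊗ a` is injective because `A` is torsion-free. The restriction of `f` to the
`f`-invariant subspace `ker (f ^ k - 1)` has a squarefree minimal polynomial dividing `X ^ k - 1`,
whose prime factors are cyclotomic polynomials `Φ e` with `φ e ≤ h`. Every such `e` divides
`(h + 1)! ^ (h + 1)`, because `φ (p ^ j) ≤ h` forces `p ≤ h + 1` and `j ≤ h + 1`; hence
`f ^ ((h + 1)! ^ (h + 1))` fixes `1 ⊗ a`.
-/

open scoped Nat TensorProduct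
open Polynomial

theorem Nat.dvd_factorial_pow_of_totient_le {e H : ℕ} (he : e ≠ 0) (hφ : φ e ≤ H) :
    e ∣ (H + 1)! ^ (H + 1) := by
  rw [← Nat.factorization_prime_le_iff_dvd he (by positivity)]
  intro p hp
  set j := e.factorization p
  rcases j.eq_zero_or_pos with hj | hj
  · simp [hj]
  have htot : p ^ (j - 1) * (p - 1) ≤ H := by
    rw [← Nat.totient_prime_pow hp hj]
    exact (Nat.le_of_dvd (Nat.totient_pos.2 (Nat.pos_of_ne_zero he))
      (Nat.totient_dvd_of_dvd (Nat.ordProj_dvd e p))).trans hφ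
  have hp_le : p ≤ H + 1 := by
    have := Nat.le_mul_of_pos_left (p - 1) (pow_pos hp.pos (j - 1))
    omega
  have hj_le : j ≤ H + 1 := by
    have : j - 1 < H :=
      calc j - 1 < 2 ^ (j - 1) := Nat.lt_two_pow_self
        _ ≤ p ^ (j - 1) := Nat.pow_le_pow_left hp.two_le _
        _ ≤ p ^ (j - 1) * (p - 1) := Nat.le_mul_of_pos_right _ (Nat.sub_pos_of_lt hp.one_lt)
        _ ≤ H := htot
    omega
  rw [← hp.pow_dvd_iff_le_factorization (by positivity)]
  exact (pow_dvd_pow p hj_le).trans (pow_dvd_pow_of_dvd (Nat.dvd_factorial hp.pos hp_le) _)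

theorem Squarefree.dvd_of_forall_prime_dvd {α : Type*} [CommMonoidWithZero α] [Nontrivial α]
    [UniqueFactorizationMonoid α] {q b : α} (hq : Squarefree q)
    (h : ∀ p, Prime p → p ∣ q → p ∣ b) : q ∣ b := by
  classical
  have hprod : (UniqueFactorizationMonoid.factors q).prod ∣
      b ^ Multiset.card (UniqueFactorizationMonoid.factors q) := by
    simpa using Multiset.prod_dvd_prod_of_dvd id (fun _ ↦ b) fun p hp ↦
      h p (UniqueFactorizationMonoid.prime_of_factor p hp)
        (UniqueFactorizationMonoid.dvd_of_mem_factors hp)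
  exact hq.isRadical _ _
    ((UniqueFactorizationMonoid.factors_prod hq.ne_zero).symm.dvd.trans hprod)

theorem Polynomial.dvd_X_pow_factorial_pow_sub_one {q : ℚ[X]} {k H : ℕ} (hk : k ≠ 0)
    (hq : q ∣ X ^ k - 1) (hdeg : q.natDegree ≤ H) : q ∣ X ^ ((H + 1)! ^ (H + 1)) - 1 := by
  have hsep : (X ^ k - 1 : ℚ[X]).Separable :=
    X_pow_sub_one_separable_iff.2 (by exact_mod_cast hk)
  have hq0 : q ≠ 0 := ne_zero_of_dvd_ne_zero hsep.ne_zero hq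
  refine (hsep.squarefree.squarefree_of_dvd hq).dvd_of_forall_prime_dvd fun p hp hpq ↦ ?_
  obtain ⟨e, he, hpe⟩ : ∃ e ∈ k.divisors, p ∣ cyclotomic e ℚ := by
    rw [← prod_cyclotomic_eq_X_pow_sub_one (Nat.pos_of_ne_zero hk)] at hq
    exact hp.exists_mem_finset_dvd (hpq.trans hq)
  have he0 : e ≠ 0 := Nat.ne_of_gt (Nat.pos_of_mem_divisors he)
  have hcyc_dvd : cyclotomic e ℚ ∣ q :=
    ((hp.irreducible.associated_of_dvd (cyclotomic.irreducible_rat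
      (Nat.pos_of_ne_zero he0)) hpe).symm.dvd).trans hpq
  have htot : φ e ≤ H := by
    rw [← natDegree_cyclotomic e ℚ]
    exact (natDegree_le_of_dvd hcyc_dvd hq0).trans hdeg
  have hN : (H + 1)! ^ (H + 1) ≠ 0 := by positivity
  rw [← prod_cyclotomic_eq_X_pow_sub_one (Nat.pos_of_ne_zero hN)]
  exact hpe.trans (Finset.dvd_prod_of_mem _
    (Nat.mem_divisors.2 ⟨Nat.dvd_factorial_pow_of_totient_le he0 htot, hN⟩))

theorem Module.End.pow_factorial_pow_eq_one {V : Type*} [AddCommGroup V] [Module ℚ V]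
    [FiniteDimensional ℚ V] {H : ℕ} (hH : Module.finrank ℚ V ≤ H) {g : Module.End ℚ V}
    {k : ℕ} (hk : k ≠ 0) (hgk : g ^ k = 1) : g ^ ((H + 1)! ^ (H + 1)) = 1 := by
  have hmin : minpoly ℚ g ∣ X ^ k - 1 := minpoly.dvd ℚ g (by simp [hgk])
  have hdeg : (minpoly ℚ g).natDegree ≤ H :=
    (natDegree_le_of_dvd g.minpoly_dvd_charpoly g.charpoly_monic.ne_zero).trans
      (g.charpoly_natDegree.trans_le hH)
  obtain ⟨c, hc⟩ := Polynomial.dvd_X_pow_factorial_pow_sub_one hk hmin hdeg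
  simpa [sub_eq_zero] using congr(aeval g $hc)

theorem Module.End.pow_factorial_pow_apply_eq_self {V : Type*} [AddCommGroup V] [Module ℚ V]
    [FiniteDimensional ℚ V] {H : ℕ} (hH : Module.finrank ℚ V ≤ H) (f : Module.End ℚ V)
    {v : V} {k : ℕ} (hk : k ≠ 0) (hv : (f ^ k) v = v) : (f ^ ((H + 1)! ^ (H + 1))) v = v := by
  set W := LinearMap.ker (f ^ k - 1)
  have hfW : ∀ w ∈ W, f w ∈ W := fun w hw ↦ by
    rw [LinearMap.mem_ker] at hw ⊢
    rw [← Module.End.mul_apply, ((Commute.pow_self f k).sub_left (Commute.one_left f)).eq,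
      Module.End.mul_apply, hw, map_zero]
  have hg : (f.restrict hfW) ^ k = 1 := by
    ext ⟨w, hw⟩
    rw [Module.End.pow_restrict, LinearMap.coe_restrict_apply]
    simpa [W, sub_eq_zero] using hw
  have hvW : v ∈ W := by simp [W, hv]
  have hfix := congr($(Module.End.pow_factorial_pow_eq_one ((Submodule.finrank_le W).trans hH)
    hk hg) ⟨v, hvW⟩)
  rwa [Module.End.pow_restrict, LinearMap.restrict_apply, Module.End.one_apply,
    Subtype.mk.injEq] at hfix

theorem AddAut.coe_nsmul {A : Type*} [Add A] (t : AddAut A) (n : ℕ) : ⇑(n • t) = t^[n] := by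
  induction n with
  | zero => rfl
  | succ n ih => rw [succ_nsmul', AddAut.coe_add, ih, Function.iterate_succ']

theorem TensorProduct.one_tmul_injective_of_isAddTorsionFree (A : Type*) [AddCommGroup A]
    [IsAddTorsionFree A] : Function.Injective fun a : A ↦ (1 : ℚ) ⊗ₜ[ℤ] a := by
  have : IsLocalizedModule (nonZeroDivisors ℤ) (TensorProduct.mk ℤ ℚ A 1) :=
    (isLocalizedModule_iff_isBaseChange (nonZeroDivisors ℤ) ℚ _).2
      (TensorProduct.isBaseChange ℤ A ℚ)
  exact (IsLocalizedModule.injective_iff_isRegular (nonZeroDivisors ℤ)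
    (TensorProduct.mk ℤ ℚ A 1)).2
      fun c ↦ (isRegular_iff_mem_nonZeroDivisors.2 c.2).isSMulRegular

theorem AddAut.nsmul_factorial_pow_apply_eq_self {A : Type*} [AddCommGroup A]
    [IsAddTorsionFree A] [FiniteDimensional ℚ (ℚ ⊗[ℤ] A)] {H : ℕ}
    (hH : Module.finrank ℚ (ℚ ⊗[ℤ] A) ≤ H) (t : AddAut A) {a : A} {k : ℕ} (hk : k ≠ 0)
    (hka : (k • t) a = a) : (((H + 1)! ^ (H + 1)) • t) a = a := by
  set f := (t.toIntLinearEquiv : Module.End ℤ A).baseChange ℚ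
  have hf : ∀ n x, (f ^ n) ((1 : ℚ) ⊗ₜ x) = (1 : ℚ) ⊗ₜ (n • t) x := fun n x ↦ by
    rw [← LinearMap.baseChange_pow, LinearMap.baseChange_tmul, Module.End.coe_pow,
      AddAut.coe_nsmul]
    rfl
  have hfix := Module.End.pow_factorial_pow_apply_eq_self hH f (v := (1 : ℚ) ⊗ₜ a) hk
    (by rw [hf, hka])
  rw [hf] at hfix
  exact TensorProduct.one_tmul_injective_of_isAddTorsionFree A hfix

/-- For every natural number `h` there exists an integer `ν = ν(h)` with the
following property: for every torsion-free abelian group `A` of rank `h`, every automorphism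
`t` of `A`, and every `a ∈ A`, if `t^k(a) = a` for some integer `k ≥ 1`, then `t^m(a) = a`
for some integer `m` with `1 ≤ m ≤ ν`. -/
theorem stmt_4 (h : ℕ) :
    ∃ ν : ℕ, 1 ≤ ν ∧
      ∀ (A : Type) [AddCommGroup A], (∀ g : A, g ≠ 0 → ¬IsOfFinAddOrder g) →
        ∀ (_ : FiniteDimensional ℚ (ℚ ⊗[ℤ] A)),
          Module.finrank ℚ (ℚ ⊗[ℤ] A) = h →
          ∀ (t : AddAut A) (a : A) (k : ℕ), 1 ≤ k → (k • t) a = a →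
            ∃ m : ℕ, 1 ≤ m ∧ m ≤ ν ∧ (m • t) a = a := by
  have hν : 1 ≤ (h + 1)! ^ (h + 1) := Nat.one_le_iff_ne_zero.2 (by positivity)
  refine ⟨_, hν, fun A _ htf _ hrank t a k hk hka ↦ ?_⟩
  have : IsAddTorsionFree A := .of_not_isOfFinAddOrder fun g ↦ htf g
  exact ⟨_, hν, le_rfl, t.nsmul_factorial_pow_apply_eq_self hrank.le (by omega) hka⟩
end

section
/- For every natural number n there exists an integer ν = ν(n) such that every ℚ-linear automorphism of the vector space ℚ^n which has finite order has order at most ν(n). -/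
open Polynomial
set_option maxHeartbeats 1000000

lemma stmt5_aux (n p k : ℕ) (hp : p.Prime)
    (ψ : (Fin n → ℚ) ≃ₗ[ℚ] (Fin n → ℚ)) (hord : orderOf ψ = p ^ (k + 1)) :
    p ^ (k + 1) ≤ 2 * n := by
  haveI : Fact p.Prime := ⟨hp⟩
  set f : Module.End ℚ (Fin n → ℚ) := ψ.toLinearMap with hf
  have hΘ : ∀ j : ℕ, (ψ ^ j).toLinearMap = f ^ j := fun j =>
    map_pow (LinearEquiv.automorphismGroup.toLinearMapMonoidHom) ψ j
  have h1 : f ^ p ^ (k + 1) = 1 := by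
    rw [← hΘ, ← hord, pow_orderOf_eq_one]; rfl
  have h2 : f ^ p ^ k ≠ 1 := by
    intro h
    have : (ψ ^ p ^ k) = 1 := by
      apply LinearEquiv.toLinearMap_injective
      rw [hΘ, h]; rfl
    have hd := orderOf_dvd_of_pow_eq_one this
    rw [hord] at hd
    exact absurd (Nat.le_of_dvd (pow_pos hp.pos _) hd)
      (not_le.2 (pow_lt_pow_right₀ hp.one_lt (Nat.lt_succ_self k)))
  set μ := minpoly ℚ f with hμ
  have hμ1 : μ ∣ X ^ p ^ (k + 1) - 1 := by
    apply minpoly.dvd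
    rw [map_sub, map_one, aeval_X_pow, h1, sub_self]
  have hμ2 : ¬ μ ∣ X ^ p ^ k - 1 := by
    intro hdvd
    apply h2
    obtain ⟨c, hc⟩ := hdvd
    have : (aeval f) (X ^ p ^ k - 1 : ℚ[X]) = 0 := by
      rw [hc, map_mul, minpoly.aeval, zero_mul]
    rw [map_sub, map_one, aeval_X_pow] at this
    exact sub_eq_zero.mp this
  have hcyc : cyclotomic (p ^ (k + 1)) ℚ ∣ μ := by
    by_contra h
    have hcop : IsCoprime (cyclotomic (p ^ (k + 1)) ℚ) μ :=
      ((cyclotomic.irreducible_rat (pow_pos hp.pos _)).coprime_iff_not_dvd).2 h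
    apply hμ2
    apply hcop.symm.dvd_of_dvd_mul_right
    rw [mul_comm, cyclotomic_prime_pow_mul_X_pow_sub_one]
    exact hμ1
  have hμ0 : μ ≠ 0 := minpoly.ne_zero (LinearMap.isIntegral f)
  have hdeg1 : (p ^ (k + 1)).totient ≤ μ.natDegree := by
    have := Polynomial.natDegree_le_of_dvd hcyc hμ0
    rwa [natDegree_cyclotomic] at this
  have hdeg2 : μ.natDegree ≤ n := by
    have h3 := Polynomial.natDegree_le_of_dvd (LinearMap.minpoly_dvd_charpoly f)
      f.charpoly_monic.ne_zero
    rwa [f.charpoly_natDegree, Module.finrank_fin_fun] at h3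
  have ht : p ^ k * (p - 1) ≤ n := by
    rw [← Nat.totient_prime_pow_succ hp k]
    exact hdeg1.trans hdeg2
  calc p ^ (k + 1) = p ^ k * p := by ring
    _ ≤ p ^ k * (2 * (p - 1)) := by
        have h2p := hp.two_le
        apply Nat.mul_le_mul_left
        omega
    _ = 2 * (p ^ k * (p - 1)) := by ring
    _ ≤ 2 * n := Nat.mul_le_mul_left 2 ht

/-- For every natural number `n` there exists an integer `ν = ν(n)` such that
every `ℚ`-linear automorphism of `ℚ^n` which has finite order has order at most `ν(n)`. -/
theorem stmt_5 (n : ℕ) :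
    ∃ ν : ℕ, 1 ≤ ν ∧
      ∀ φ : (Fin n → ℚ) ≃ₗ[ℚ] (Fin n → ℚ), IsOfFinOrder φ → orderOf φ ≤ ν := by
  refine ⟨(2 * n + 1).factorial, Nat.one_le_iff_ne_zero.2 (Nat.factorial_ne_zero _), ?_⟩
  intro φ hφ
  set m := orderOf φ with hm
  have hm0 : m ≠ 0 := hφ.orderOf_pos.ne'
  have hν0 : (2 * n + 1).factorial ≠ 0 := Nat.factorial_ne_zero _
  refine Nat.le_of_dvd (Nat.pos_of_ne_zero hν0) ?_
  rw [← Nat.factorization_le_iff_dvd hm0 hν0, Finsupp.le_def]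
  intro p
  rcases eq_or_ne (m.factorization p) 0 with h0 | hne
  · simp [h0]
  obtain ⟨k', hk⟩ : ∃ k', m.factorization p = k' + 1 :=
    ⟨m.factorization p - 1, (Nat.succ_pred_eq_of_ne_zero hne).symm⟩
  have hp : p.Prime := Nat.prime_of_mem_primeFactors
    ((Nat.support_factorization m) ▸ Finsupp.mem_support_iff.2 hne)
  have hqdvd : p ^ (k' + 1) ∣ m := hk ▸ Nat.ordProj_dvd m p
  have hexp0 : m / p ^ (k' + 1) ≠ 0 :=
    (Nat.div_pos (Nat.le_of_dvd (Nat.pos_of_ne_zero hm0) hqdvd) (pow_pos hp.pos _)).ne'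
  have hord : orderOf (φ ^ (m / p ^ (k' + 1))) = p ^ (k' + 1) := by
    rw [orderOf_pow' _ hexp0, ← hm, Nat.gcd_eq_right (Nat.div_dvd_of_dvd hqdvd),
      Nat.div_div_self hqdvd hm0]
  have hle : p ^ (k' + 1) ≤ 2 * n := stmt5_aux n p k' hp _ hord
  have hdvd : p ^ (k' + 1) ∣ (2 * n + 1).factorial :=
    Nat.dvd_factorial (pow_pos hp.pos _) (hle.trans (Nat.le_succ _))
  rw [hk]
  exact (Nat.Prime.pow_dvd_iff_le_factorization hp hν0).1 hdvd
end

section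
/- Let G be a group with a normal subgroup N such that N is torsion-free and nilpotent and the quotient G/N is torsion-free. Then the center Z(N) of N, regarded as a subgroup of G, is a normal subgroup of G, and the quotient group G/Z(N) is torsion-free. -/
/-!
Write `ζᵢ` for the upper central series of a group `H`. If `H` is torsion-free, `u ∈ ζᵢ₊₁` and
`uⁿ ∈ ζᵢ`, then for every `y` the commutator `⁅u, y⁆ ∈ ζᵢ` commutes with `u` modulo `ζᵢ₋₁`, so
`⁅u, y⁆ⁿ ≡ ⁅uⁿ, y⁆ ≡ 1` modulo `ζᵢ₋₁`, and induction on `i` gives `u ∈ ζᵢ`. Descending the upper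
central series of a nilpotent group, `uⁿ ∈ Z(H)` forces `u ∈ Z(H)`. Finally, if `xᵐ ∈ Z(N)` for
some `x ∈ G`, torsion-freeness of `G/N` puts `x` in `N`, and then `x ∈ Z(N)`.
-/

open scoped commutatorElement

section Commutator

variable {G : Type*} [Group G]

theorem commutatorElement_pow_left {a b : G} (h : Commute a ⁅a, b⁆) (n : ℕ) :
    ⁅a ^ n, b⁆ = ⁅a, b⁆ ^ n := by
  induction n with
  | zero => simp
  | succ k ih =>
    calc ⁅a ^ (k + 1), b⁆ = a * ⁅a ^ k, b⁆ * a⁻¹ * ⁅a, b⁆ := by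
          simp only [commutatorElement_def, pow_succ']; group
      _ = ⁅a, b⁆ ^ (k + 1) := by
          rw [ih, (h.pow_right k).eq, pow_succ]; group

theorem commutatorElement_pow_left_mem_iff {K : Subgroup G} [K.Normal] {a b : G}
    (h : ⁅a, ⁅a, b⁆⁆ ∈ K) (n : ℕ) : ⁅a ^ n, b⁆ ∈ K ↔ ⁅a, b⁆ ^ n ∈ K := by
  have hcomm : Commute (a : G ⧸ K) ⁅(a : G ⧸ K), (b : G ⧸ K)⁆ := by
    rw [← commutatorElement_eq_one_iff_commute]
    exact (QuotientGroup.eq_one_iff _).mpr h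
  rw [← QuotientGroup.eq_one_iff, ← QuotientGroup.eq_one_iff (⁅a, b⁆ ^ n)]
  simp only [← QuotientGroup.mk'_apply, map_pow, map_commutatorElement]
  simp only [QuotientGroup.mk'_apply, commutatorElement_pow_left hcomm]

end Commutator

section TorsionFree

variable {H : Type*} [Group H]

theorem Monoid.IsTorsionFree.eq_one_of_pow_eq_one_s8 (htf : Monoid.IsTorsionFree H) {u : H}
    {n : ℕ} (hn : n ≠ 0) (hun : u ^ n = 1) : u = 1 := by
  by_contra hu
  exact htf u hu (isOfFinOrder_iff_pow_eq_one.mpr ⟨n, Nat.pos_of_ne_zero hn, hun⟩)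

namespace Subgroup

theorem mem_upperCentralSeries_of_pow_mem_of_mem_succ (htf : Monoid.IsTorsionFree H) {n : ℕ}
    (hn : n ≠ 0) {i : ℕ} {u : H} (hu : u ∈ upperCentralSeries H (i + 1))
    (hun : u ^ n ∈ upperCentralSeries H i) : u ∈ upperCentralSeries H i := by
  induction i generalizing u with
  | zero =>
    rw [upperCentralSeries_zero, mem_bot] at hun ⊢
    exact htf.eq_one_of_pow_eq_one_s8 hn hun
  | succ i ih =>
    rw [mem_upperCentralSeries_succ_iff]
    intro y
    have hc : ⁅u, y⁆ ∈ upperCentralSeries H (i + 1) :=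
      mem_upperCentralSeries_succ_iff.mp hu y
    have hcn : ⁅u, y⁆ ^ n ∈ upperCentralSeries H i :=
      (commutatorElement_pow_left_mem_iff (commutatorElement_inv ⁅u, y⁆ u ▸
        inv_mem (hc u)) n).mp (hun y)
    exact ih hc hcn

theorem mem_upperCentralSeries_of_pow_mem (htf : Monoid.IsTorsionFree H)
    (hnilp : Group.IsNilpotent H) {n : ℕ} (hn : n ≠ 0) {i : ℕ} {u : H}
    (hun : u ^ n ∈ upperCentralSeries H i) : u ∈ upperCentralSeries H i := by
  obtain ⟨k, hk⟩ := hnilp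
  have descend : ∀ j, u ∈ upperCentralSeries H (i + j) → u ∈ upperCentralSeries H i := by
    intro j
    induction j with
    | zero => exact id
    | succ j ih =>
      exact fun hu => ih <| mem_upperCentralSeries_of_pow_mem_of_mem_succ htf hn hu <|
        upperCentralSeries_mono H (Nat.le_add_right i j) hun
  exact descend k <| upperCentralSeries_mono H (Nat.le_add_left k i) (hk ▸ mem_top u)

theorem mem_center_of_pow_mem_center (htf : Monoid.IsTorsionFree H)
    (hnilp : Group.IsNilpotent H) {n : ℕ} (hn : n ≠ 0) {u : H} (hun : u ^ n ∈ center H) :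
    u ∈ center H := by
  rw [← upperCentralSeries_one] at hun ⊢
  exact mem_upperCentralSeries_of_pow_mem htf hnilp hn hun

end Subgroup

end TorsionFree

theorem mem_of_pow_mem_of_isTorsionFree_quotient {G : Type*} [Group G] {N : Subgroup G}
    [N.Normal] (htfQ : Monoid.IsTorsionFree (G ⧸ N)) {n : ℕ} (hn : n ≠ 0) {x : G}
    (hxn : x ^ n ∈ N) : x ∈ N := by
  rw [← QuotientGroup.eq_one_iff] at hxn ⊢
  exact htfQ.eq_one_of_pow_eq_one_s8 hn hxn

/-- Let `G` be a group with a normal subgroup `N` such that `N` is torsion-free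
and nilpotent and the quotient `G/N` is torsion-free.  Then the center `Z(N)` of `N`, regarded
as a subgroup of `G`, is a normal subgroup of `G`, and the quotient group `G/Z(N)` is
torsion-free. -/
theorem stmt_8 {G : Type*} [Group G] (N : Subgroup G) [N.Normal]
    (htfN : Monoid.IsTorsionFree N) (hnilp : Group.IsNilpotent N)
    (htfQ : Monoid.IsTorsionFree (G ⧸ N)) :
    ((Subgroup.center N).map N.subtype).Normal ∧
      ∀ [((Subgroup.center N).map N.subtype).Normal],
        Monoid.IsTorsionFree (G ⧸ (Subgroup.center N).map N.subtype) := by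
  refine ⟨inferInstance, fun g hg hfin => hg ?_⟩
  obtain ⟨m, hm, hgm⟩ := isOfFinOrder_iff_pow_eq_one.mp hfin
  obtain ⟨x, rfl⟩ := QuotientGroup.mk_surjective g
  obtain ⟨z, hz, hzx⟩ : x ^ m ∈ (Subgroup.center N).map N.subtype := by
    rwa [← QuotientGroup.eq_one_iff, QuotientGroup.mk_pow]
  have hxN : x ∈ N := mem_of_pow_mem_of_isTorsionFree_quotient htfQ hm.ne' (hzx ▸ z.2)
  have hxm : (⟨x, hxN⟩ : N) ^ m = z := Subtype.ext hzx.symm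
  rw [QuotientGroup.eq_one_iff]
  exact ⟨⟨x, hxN⟩, Subgroup.mem_center_of_pow_mem_center htfN hnilp hm.ne' (hxm ▸ hz), rfl⟩
end
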